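/- For all real numbers h1, h2 with 0 < h1 ≤ h2 and every ρ ∈ [0, 1), the quantity h_ρ := (h1 + h2 − 2ρ·√(h1·h2))/(1 − ρ²) satisfies h_ρ ≥ h2. Moreover, if h1 < h2, then equality h_ρ = h2 holds if and only if ρ = √(h1/h2). -/

import Mathlib

/-!
With `a = √h1` and `b = √h2` one has `√(h1 h2) = a b`, and completing the square in the numerator
gives `h1 + h2 - 2ρab = h2 (1 - ρ²) + (a - ρb)²`. Hence `h_ρ = h2 + (a - ρb)² / (1 - ρ²)`, which is
at least `h2` for `ρ² < 1`, with equality exactly when `a = ρb`, i.e. `ρ = √(h1 / h2)`.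
-/

open Real

noncomputable section

/-- The equivalent cooperative-channel gain `h_ρ`. -/
def cooperativeGain (h1 h2 ρ : ℝ) : ℝ :=
  (h1 + h2 - 2 * ρ * √(h1 * h2)) / (1 - ρ ^ 2)

theorem cooperativeGain_eq_add_sq_div {h1 h2 : ℝ} (hh1 : 0 ≤ h1) (hh2 : 0 ≤ h2) {ρ : ℝ}
    (hρ : ρ ^ 2 ≠ 1) :
    cooperativeGain h1 h2 ρ = h2 + (√h1 - ρ * √h2) ^ 2 / (1 - ρ ^ 2) := by
  have hd : 1 - ρ ^ 2 ≠ 0 := sub_ne_zero.mpr hρ.symm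
  rw [cooperativeGain, sqrt_mul hh1, add_div' _ _ _ hd]
  congr 1
  linear_combination (-1 : ℝ) * sq_sqrt hh1 - ρ ^ 2 * sq_sqrt hh2

theorem le_cooperativeGain {h1 h2 : ℝ} (hh1 : 0 ≤ h1) (hh2 : 0 ≤ h2) {ρ : ℝ} (hρ : ρ ^ 2 < 1) :
    h2 ≤ cooperativeGain h1 h2 ρ := by
  rw [cooperativeGain_eq_add_sq_div hh1 hh2 hρ.ne]
  have : 0 ≤ (√h1 - ρ * √h2) ^ 2 / (1 - ρ ^ 2) := div_nonneg (sq_nonneg _) (by linarith)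
  linarith

theorem cooperativeGain_eq_iff {h1 h2 : ℝ} (hh1 : 0 ≤ h1) (hh2 : 0 < h2) {ρ : ℝ}
    (hρ : ρ ^ 2 ≠ 1) :
    cooperativeGain h1 h2 ρ = h2 ↔ ρ = √(h1 / h2) := by
  have hd : 1 - ρ ^ 2 ≠ 0 := sub_ne_zero.mpr hρ.symm
  rw [cooperativeGain_eq_add_sq_div hh1 hh2.le hρ, add_eq_left, div_eq_zero_iff, or_iff_left hd,
    pow_eq_zero_iff two_ne_zero, sub_eq_zero, sqrt_div' _ hh2.le,
    eq_div_iff (sqrt_pos.mpr hh2).ne', eq_comm]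

end

theorem sato_hrho_min (h1 h2 : ℝ) (hh1 : 0 < h1) (h12 : h1 ≤ h2) :
    ∀ ρ : ℝ, 0 ≤ ρ → ρ < 1 →
      h2 ≤ (h1 + h2 - 2 * ρ * Real.sqrt (h1 * h2)) / (1 - ρ ^ 2) ∧
      (h1 < h2 →
        ((h1 + h2 - 2 * ρ * Real.sqrt (h1 * h2)) / (1 - ρ ^ 2) = h2 ↔
          ρ = Real.sqrt (h1 / h2))) := by
  intro ρ hρ0 hρ1
  have hρ : ρ ^ 2 < 1 := pow_lt_one₀ hρ0 hρ1 two_ne_zero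
  have hh2 : 0 < h2 := hh1.trans_le h12
  exact ⟨le_cooperativeGain hh1.le hh2.le hρ, fun _ => cooperativeGain_eq_iff hh1.le hh2 hρ.ne⟩
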